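/- Fix c > 1 and S₁ > 0, and let 𝒮 ⊂ [S₁, ∞) be a finite set of standard errors with min 𝒮 = S₁. Among all η > 0 such that the thresholds t_η(S) = Φ̄(η/(2S) + log(c)·S/η) are non-increasing in S on 𝒮 for every finite 𝒮 ⊂ [S₁, ∞) containing S₁, the value η̃ = S₁√(2 log c) is the maximum: (i) for η = η̃ the map S ↦ t_η(S) is non-increasing on [S₁, ∞), and (ii) for every η > η̃ there exist S₁ ≤ S < S′ with t_η(S) < t_η(S′). -/
import Mathlib


open Real Set

noncomputable def phi (x : ℝ) : ℝ := (Real.sqrt (2 * Real.pi))⁻¹ * Real.exp (-x ^ 2 / 2)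
noncomputable def PhiCDF (x : ℝ) : ℝ := ∫ t in Set.Iic x, phi t
noncomputable def Phibar (x : ℝ) : ℝ := 1 - PhiCDF x

/-- Threshold t_η(S) = Φ̄(η/(2S) + log(c)·S/η). -/
noncomputable def thr (c η S : ℝ) : ℝ := Phibar (η / (2 * S) + Real.log c * S / η)

lemma phi_pos (x : ℝ) : 0 < phi x := by
  have h : (0:ℝ) < Real.sqrt (2 * Real.pi) :=
    Real.sqrt_pos.2 (by positivity)
  exact mul_pos (inv_pos.2 h) (Real.exp_pos _)

lemma phi_integrable : MeasureTheory.Integrable phi := by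
  have h : MeasureTheory.Integrable (fun x : ℝ => Real.exp (-(1/2) * x ^ 2)) :=
    integrable_exp_neg_mul_sq (by norm_num)
  have := h.const_mul (Real.sqrt (2 * Real.pi))⁻¹
  convert this using 2 with x
  unfold phi
  ring_nf

lemma PhiCDF_strictMono : StrictMono PhiCDF := by
  intro a b hab
  have hI : ∀ x : ℝ, MeasureTheory.IntegrableOn phi (Set.Iic x) :=
    fun x => phi_integrable.integrableOn
  have h : PhiCDF b - PhiCDF a = ∫ t in a..b, phi t := by
    unfold PhiCDF
    exact intervalIntegral.integral_Iic_sub_Iic (hI a) (hI b)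
  have hpos : 0 < ∫ t in a..b, phi t :=
    intervalIntegral.intervalIntegral_pos_of_pos phi_integrable.intervalIntegrable
      phi_pos hab
  linarith [h]

lemma Phibar_strictAnti : StrictAnti Phibar := by
  intro a b hab
  have := PhiCDF_strictMono hab
  unfold Phibar
  linarith

/-- η̃ = S₁√(2 log c) is the maximal η for which the thresholds are
non-increasing in S on [S₁, ∞): (i) for η = η̃ the map is non-increasing on [S₁, ∞),
and (ii) for each η > η̃ there are S₁ ≤ S < S′ with t_η(S) < t_η(S′). -/
theorem stmt_5 (c S₁ : ℝ) (hc : 1 < c) (hS₁ : 0 < S₁) :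
    AntitoneOn (fun S => thr c (S₁ * Real.sqrt (2 * Real.log c)) S) (Set.Ici S₁) ∧
    ∀ η : ℝ, S₁ * Real.sqrt (2 * Real.log c) < η →
      ∃ S S' : ℝ, S₁ ≤ S ∧ S < S' ∧ thr c η S < thr c η S' := by
  set L := Real.log c with hLdef
  have hL : 0 < L := Real.log_pos hc
  have hsq : Real.sqrt (2 * L) ^ 2 = 2 * L := Real.sq_sqrt (by positivity)
  have hsqpos : 0 < Real.sqrt (2 * L) := Real.sqrt_pos.2 (by positivity)
  set η₀ := S₁ * Real.sqrt (2 * L) with hη₀def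
  have hη₀ : 0 < η₀ := mul_pos hS₁ hsqpos
  have hη₀sq : η₀ ^ 2 = 2 * L * S₁ ^ 2 := by
    rw [hη₀def, mul_pow, hsq]; ring
  constructor
  · intro a ha b hb hab
    simp only [Set.mem_Ici] at ha hb
    have hapos : 0 < a := lt_of_lt_of_le hS₁ ha
    have hbpos : 0 < b := lt_of_lt_of_le hS₁ hb
    simp only [thr]
    apply Phibar_strictAnti.antitone
    rw [div_add_div _ _ (by positivity) (ne_of_gt hη₀),
      div_add_div _ _ (by positivity) (ne_of_gt hη₀),
      div_le_div_iff₀ (by positivity) (by positivity)]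
    rw [← hLdef]
    have hab2 : S₁ ^ 2 ≤ a * b := by nlinarith
    have key : 0 ≤ (b - a) * (2 * L * (a * b) - η₀ ^ 2) :=
      mul_nonneg (by linarith) (by nlinarith)
    nlinarith [mul_nonneg key hη₀.le]
  · intro η hη
    have hηpos : 0 < η := lt_trans hη₀ hη
    refine ⟨S₁, η / Real.sqrt (2 * L), le_refl _, ?_, ?_⟩
    · rw [lt_div_iff₀ hsqpos]
      exact hη
    · set S' := η / Real.sqrt (2 * L) with hS'def
      have hS' : 0 < S' := div_pos hηpos hsqpos
      have hS'S₁ : S₁ < S' := by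
        rw [hS'def, lt_div_iff₀ hsqpos]; exact hη
      have hS'sq : 2 * L * S' ^ 2 = η ^ 2 := by
        rw [hS'def, div_pow, hsq]; field_simp
      simp only [thr]
      apply Phibar_strictAnti
      rw [div_add_div _ _ (by positivity) (ne_of_gt hηpos),
        div_add_div _ _ (by positivity) (ne_of_gt hηpos),
        div_lt_div_iff₀ (by positivity) (by positivity)]
      rw [← hLdef]
      have key : 0 < (S' - S₁) * (η ^ 2 - 2 * L * S₁ * S') := by
        apply mul_pos (by linarith)
        nlinarith [mul_pos (sub_pos.2 hS'S₁) (mul_pos hL hS')]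
      nlinarith [mul_pos key hηpos]
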